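/- arXiv:2604.24546 — 3 statements merged into one kernel-verified Lean document; each statement's English description precedes it below -/
import Mathlib

section
/- Let A₀, A₁ₐ, A₁ᵦ, A₂ be disjoint events with probabilities 0.9925, 0.0025, 0.0025, 0.0025 respectively, and S = 2·1_{A₁ₐ ∪ A₁ᵦ} + 4·1_{A₂}. With ρ₁ = ES_{0.01} and ρ₂ = ES_{0.0075} (Expected Shortfall over the top 1% and 0.75% of mass respectively), the allocation X₁ = 1_{A₁ₐ} + 2·1_{A₁ᵦ} + 4·1_{A₂}, X₂ = 1_{A₁ₐ} satisfies X₁ + X₂ = S, 0 ≤ Xᵢ, VaR_{0.995}(Xᵢ) ≤ 1 for i = 1,2, and ρ₁(X₁) + ρ₂(X₂) = 25/12; whereas every comonotonic allocation (X₁, X₂) of S satisfying the same constraints has ρ₁(X₁) + ρ₂(X₂) ≥ 9/4 > 25/12. -/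
/-!
All random variables involved are constant on the blocks `A₀, A₁ₐ, A₁ᵦ, A₂` and vanish on `A₀`
(for `fᵢ(S)` because `f₁(0) + f₂(0) = 0` with both terms nonnegative), so each law has an atom of
mass `1 - 3p` at `0` and atoms of mass `p = 0.0025` at the values `s, t, u` taken on the other
three blocks. When `0 ≤ s ≤ t ≤ u`, the quantile function `v ↦ VaR_{1-v}` is the step function
taking the values `u, t, s, 0` on consecutive intervals of length `p`, so `VaR_{0.995} = s` and
`ES_β = p (s + t + u) / β` for `3p ≤ β ≤ 1`. This gives `7/4 + 1/3 = 25/12` for `(X₁, X₂)`.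
For a comonotonic allocation the total risk is
`(2a + c)/4 + (2(2 - a) + (4 - c))/3 = 8/3 - a/6 - c/12` with `a = f₁(2) = VaR_{0.995}(f₁(S)) ≤ 1`
and `c = f₁(4) ≤ 2 + a` (monotonicity of `f₂`), which is at least `9/4`.
-/

open MeasureTheory

/-- Convex order on integrable real random variables: equal means and
`E[φ(Y)] ≤ E[φ(X)]` for every convex `φ : ℝ → ℝ` for which the expectations exist. -/
def CxLE {Ω : Type*} [MeasurableSpace Ω] (μ : Measure Ω) (Y X : Ω → ℝ) : Prop :=
  (∫ ω, Y ω ∂μ = ∫ ω, X ω ∂μ) ∧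
  ∀ φ : ℝ → ℝ, ConvexOn ℝ Set.univ φ →
    Integrable (fun ω => φ (Y ω)) μ → Integrable (fun ω => φ (X ω)) μ →
    ∫ ω, φ (Y ω) ∂μ ≤ ∫ ω, φ (X ω) ∂μ

/-- Lower `α`-quantile (Value-at-Risk): `inf {x : P(X ≤ x) ≥ α}`. -/
noncomputable def VaR {Ω : Type*} [MeasurableSpace Ω] (μ : Measure Ω)
    (X : Ω → ℝ) (α : ℝ) : ℝ :=
  sInf {x : ℝ | α ≤ (μ {ω | X ω ≤ x}).toReal}

/-- Expected Shortfall at level `β` (average of the upper `β` tail of quantiles):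
`ES_β(X) = (1/β) ∫₀^β VaR_{1-u}(X) du`. -/
noncomputable def ES {Ω : Type*} [MeasurableSpace Ω] (μ : Measure Ω)
    (X : Ω → ℝ) (β : ℝ) : ℝ :=
  (1 / β) * ∫ u in (0:ℝ)..β, VaR μ X (1 - u)

open Set Function

section StepIntegral

variable {g : ℝ → ℝ} {a b c : ℝ}

lemma intervalIntegrable_of_eqOn_Ioo (hab : a ≤ b) (h : EqOn g (fun _ => c) (Ioo a b)) :
    IntervalIntegrable g volume a b := by
  rw [intervalIntegrable_iff_integrableOn_Ioo_of_le hab]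
  exact (integrableOn_const (by simp)).congr_fun h.symm measurableSet_Ioo

lemma intervalIntegral_eq_mul_of_eqOn_Ioo (hab : a ≤ b) (h : EqOn g (fun _ => c) (Ioo a b)) :
    ∫ u in a..b, g u = (b - a) * c := by
  rw [intervalIntegral.integral_of_le hab, integral_Ioc_eq_integral_Ioo,
    setIntegral_congr_fun measurableSet_Ioo h]
  simp [hab]

end StepIntegral

lemma Pairwise.mem_iff_eq_of_mem {Ω ι : Type*} {B : ι → Set Ω} (h : Pairwise (Disjoint on B))
    {i : ι} {ω : Ω} (hω : ω ∈ B i) (j : ι) : ω ∈ B j ↔ j = i :=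
  ⟨fun hj => by_contra fun hji => disjoint_left.mp (h hji) hj hω, fun hji => hji ▸ hω⟩

lemma toReal_measure_le_eq_sum_of_partition {Ω ι : Type*} [MeasurableSpace Ω] {μ : Measure Ω}
    [IsProbabilityMeasure μ] [Fintype ι] {B : ι → Set Ω} (hB : ∀ i, MeasurableSet (B i))
    (hdisj : Pairwise (Disjoint on B)) (hmass : ∑ i, μ (B i) = 1) {Y : Ω → ℝ} {v : ι → ℝ}
    (hY : ∀ i, ∀ ω ∈ B i, Y ω = v i) (x : ℝ) :
    (μ {ω | Y ω ≤ x}).toReal = ∑ i, if v i ≤ x then (μ (B i)).toReal else 0 := by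
  classical
  have hcover : μ (⋃ i, B i)ᶜ = 0 := by
    rw [prob_compl_eq_zero_iff (MeasurableSet.iUnion hB), measure_iUnion hdisj hB,
      tsum_fintype, hmass]
  have hset : {ω | Y ω ≤ x} ∩ ⋃ i, B i = ⋃ i ∈ Finset.univ.filter (fun i => v i ≤ x), B i := by
    ext ω
    simp only [mem_inter_iff, mem_ofPred_eq, mem_iUnion, Finset.mem_filter, Finset.mem_univ,
      true_and, exists_prop]
    constructor
    · rintro ⟨hle, i, hi⟩
      exact ⟨i, hY i ω hi ▸ hle, hi⟩
    · rintro ⟨i, hle, hi⟩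
      exact ⟨(hY i ω hi).symm ▸ hle, i, hi⟩
  rw [← measure_inter_conull hcover, hset,
    measure_biUnion_finset (fun i _ j _ hij => hdisj hij) (fun i _ => hB i),
    ENNReal.toReal_sum (fun i _ => measure_ne_top μ _), Finset.sum_filter]

lemma VaR_eq_of_cdf {Ω : Type*} [MeasurableSpace Ω] {μ : Measure Ω} {Y : Ω → ℝ} {α c : ℝ}
    (hge : ∀ x, c ≤ x → α ≤ (μ {ω | Y ω ≤ x}).toReal)
    (hlt : ∀ x < c, (μ {ω | Y ω ≤ x}).toReal < α) : VaR μ Y α = c := by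
  have : {x : ℝ | α ≤ (μ {ω | Y ω ≤ x}).toReal} = Ici c :=
    Subset.antisymm (fun x hx => not_lt.mp fun h => (hlt x h).not_ge hx) hge
  rw [VaR, this, csInf_Ici]

noncomputable def atomsCDF (p s t u x : ℝ) : ℝ :=
  (if 0 ≤ x then 1 - 3 * p else 0) + (if s ≤ x then p else 0) + (if t ≤ x then p else 0)
    + (if u ≤ x then p else 0)

section ThreeAtoms

variable {Ω : Type*} [MeasurableSpace Ω] {μ : Measure Ω} {Y : Ω → ℝ} {p s t u : ℝ}

lemma VaR_eq_of_atomsCDF (hF : ∀ x, (μ {ω | Y ω ≤ x}).toReal = atomsCDF p s t u x)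
    (hp : 0 ≤ p) (hs : 0 ≤ s) (hst : s ≤ t) (htu : t ≤ u) {α : ℝ} (hα₀ : 0 < α) (hα₁ : α ≤ 1) :
    VaR μ Y α =
      if α ≤ 1 - 3 * p then 0 else if α ≤ 1 - 2 * p then s else if α ≤ 1 - p then t else u := by
  split_ifs <;> apply VaR_eq_of_cdf <;> intro x hx <;> rw [hF, atomsCDF] <;> split_ifs <;> linarith

lemma ES_eq_of_atomsCDF (hF : ∀ x, (μ {ω | Y ω ≤ x}).toReal = atomsCDF p s t u x)
    (hp : 0 ≤ p) (hs : 0 ≤ s) (hst : s ≤ t) (htu : t ≤ u) {β : ℝ} (hβ₀ : 3 * p ≤ β)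
    (hβ₁ : β ≤ 1) :
    ES μ Y β = p * (s + t + u) / β := by
  have value : ∀ v ∈ Ioo 0 β, VaR μ Y (1 - v) =
      if v < p then u else if v < 2 * p then t else if v < 3 * p then s else 0 := by
    intro v ⟨hv₀, hv₁⟩
    rw [VaR_eq_of_atomsCDF hF hp hs hst htu (by linarith) (by linarith)]
    split_ifs <;> linarith
  have piece : ∀ a b c : ℝ, 0 ≤ a → a ≤ b → b ≤ β →
      (∀ v ∈ Ioo a b,
        (if v < p then u else if v < 2 * p then t else if v < 3 * p then s else 0) = c) →
      IntervalIntegrable (fun v => VaR μ Y (1 - v)) volume a b ∧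
        ∫ v in a..b, VaR μ Y (1 - v) = (b - a) * c := by
    intro a b c ha hab hb h
    have hEq : EqOn (fun v => VaR μ Y (1 - v)) (fun _ => c) (Ioo a b) := fun v hv =>
      (value v ⟨by linarith [hv.1], by linarith [hv.2]⟩).trans (h v hv)
    exact ⟨intervalIntegrable_of_eqOn_Ioo hab hEq, intervalIntegral_eq_mul_of_eqOn_Ioo hab hEq⟩
  obtain ⟨i₁, e₁⟩ := piece 0 p u le_rfl hp (by linarith) fun v hv => by
    split_ifs <;> linarith [hv.1, hv.2]
  obtain ⟨i₂, e₂⟩ := piece p (2 * p) t hp (by linarith) (by linarith) fun v hv => by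
    split_ifs <;> linarith [hv.1, hv.2]
  obtain ⟨i₃, e₃⟩ := piece (2 * p) (3 * p) s (by linarith) (by linarith) hβ₀ fun v hv => by
    split_ifs <;> linarith [hv.1, hv.2]
  obtain ⟨i₄, e₄⟩ := piece (3 * p) β 0 (by linarith) hβ₀ le_rfl fun v hv => by
    split_ifs <;> linarith [hv.1, hv.2]
  rw [ES, ← intervalIntegral.integral_add_adjacent_intervals ((i₁.trans i₂).trans i₃) i₄,
    ← intervalIntegral.integral_add_adjacent_intervals (i₁.trans i₂) i₃,
    ← intervalIntegral.integral_add_adjacent_intervals i₁ i₂, e₁, e₂, e₃, e₄]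
  ring

end ThreeAtoms

section Blocks

variable {Ω : Type*} [MeasurableSpace Ω] {μ : Measure Ω} [IsProbabilityMeasure μ]
  {B : Fin 4 → Set Ω}

lemma toReal_measure_le_eq_atomsCDF (hB : ∀ i, MeasurableSet (B i))
    (hdisj : Pairwise (Disjoint on B))
    (hmass : ∀ i, μ (B i) = ENNReal.ofReal (![0.9925, 0.0025, 0.0025, 0.0025] i))
    {Y : Ω → ℝ} {s t u : ℝ} (hY : ∀ i, ∀ ω ∈ B i, Y ω = ![0, s, t, u] i) (x : ℝ) :
    (μ {ω | Y ω ≤ x}).toReal = atomsCDF 0.0025 s t u x := by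
  have hsum : ∑ i, μ (B i) = 1 := by
    simp [Fin.sum_univ_four, hmass]
    rw [← ENNReal.ofReal_add, ← ENNReal.ofReal_add, ← ENNReal.ofReal_add] <;> norm_num
  rw [toReal_measure_le_eq_sum_of_partition hB hdisj hsum hY, Fin.sum_univ_four]
  simp [hmass, atomsCDF]
  norm_num

lemma toReal_measure_comp_le_eq_atomsCDF (hB : ∀ i, MeasurableSet (B i))
    (hdisj : Pairwise (Disjoint on B))
    (hmass : ∀ i, μ (B i) = ENNReal.ofReal (![0.9925, 0.0025, 0.0025, 0.0025] i))
    {S : Ω → ℝ} (hS : ∀ i, ∀ ω ∈ B i, S ω = ![0, 2, 2, 4] i) {f : ℝ → ℝ} (hf₀ : f 0 = 0)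
    (x : ℝ) : (μ {ω | f (S ω) ≤ x}).toReal = atomsCDF 0.0025 (f 2) (f 2) (f 4) x :=
  toReal_measure_le_eq_atomsCDF hB hdisj hmass (fun i ω hω => by
    rw [hS i ω hω]; fin_cases i <;> simp [hf₀]) x

lemma nine_div_four_le_ES_add_ES_of_comonotone (hB : ∀ i, MeasurableSet (B i))
    (hdisj : Pairwise (Disjoint on B))
    (hmass : ∀ i, μ (B i) = ENNReal.ofReal (![0.9925, 0.0025, 0.0025, 0.0025] i))
    {S : Ω → ℝ} (hS : ∀ i, ∀ ω ∈ B i, S ω = ![0, 2, 2, 4] i) {f₁ f₂ : ℝ → ℝ}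
    (hf₁ : Monotone f₁) (hf₂ : Monotone f₂) (hsum : ∀ ω, f₁ (S ω) + f₂ (S ω) = S ω)
    (hnn₁ : ∀ ω, 0 ≤ f₁ (S ω)) (hnn₂ : ∀ ω, 0 ≤ f₂ (S ω))
    (hVaR₁ : VaR μ (fun ω => f₁ (S ω)) 0.995 ≤ 1) :
    9/4 ≤ ES μ (fun ω => f₁ (S ω)) 0.01 + ES μ (fun ω => f₂ (S ω)) 0.0075 := by
  have hne : ∀ i, (B i).Nonempty := fun i => nonempty_of_measure_ne_zero (μ := μ) <| by
    fin_cases i <;> norm_num [hmass]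
  obtain ⟨ω₀, h₀⟩ := hne 0
  obtain ⟨ω₂, h₂⟩ := hne 1
  obtain ⟨ω₄, h₄⟩ := hne 3
  have sum₀ := hsum ω₀; have sum₂ := hsum ω₂; have sum₄ := hsum ω₄
  have nn₁ := hnn₁ ω₀; have nn₂ := hnn₂ ω₀
  simp [hS 0 ω₀ h₀, hS 1 ω₂ h₂, hS 3 ω₄ h₄] at sum₀ sum₂ sum₄ nn₁ nn₂
  have z₁ : f₁ 0 = 0 := by linarith
  have z₂ : f₂ 0 = 0 := by linarith
  have m₁ : f₁ 0 ≤ f₁ 2 := hf₁ (by norm_num)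
  have m₂ : f₂ 0 ≤ f₂ 2 := hf₂ (by norm_num)
  have m₁' : f₁ 2 ≤ f₁ 4 := hf₁ (by norm_num)
  have m₂' : f₂ 2 ≤ f₂ 4 := hf₂ (by norm_num)
  have hF₁ := toReal_measure_comp_le_eq_atomsCDF hB hdisj hmass hS z₁
  have hF₂ := toReal_measure_comp_le_eq_atomsCDF hB hdisj hmass hS z₂
  rw [VaR_eq_of_atomsCDF hF₁ (by norm_num) (by linarith) le_rfl m₁' (by norm_num) (by norm_num)]
    at hVaR₁
  rw [ES_eq_of_atomsCDF hF₁ (by norm_num) (by linarith) le_rfl m₁' (by norm_num) (by norm_num),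
    ES_eq_of_atomsCDF hF₂ (by norm_num) (by linarith) le_rfl m₂' (by norm_num) (by norm_num)]
  norm_num at hVaR₁ ⊢
  linarith

end Blocks

lemma values_on_blocks {Ω : Type*} {A₀ A₁ₐ A₁ᵦ A₂ : Set Ω}
    (hdisj : Pairwise (Disjoint on ![A₀, A₁ₐ, A₁ᵦ, A₂])) {S X₁ X₂ : Ω → ℝ}
    (hS : S = fun ω => 2 * (A₁ₐ ∪ A₁ᵦ).indicator 1 ω + 4 * A₂.indicator 1 ω)
    (hX₁ : X₁ = fun ω => A₁ₐ.indicator 1 ω + 2 * A₁ᵦ.indicator 1 ω + 4 * A₂.indicator 1 ω)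
    (hX₂ : X₂ = fun ω => A₁ₐ.indicator 1 ω) (i : Fin 4) (ω : Ω)
    (hω : ω ∈ ![A₀, A₁ₐ, A₁ᵦ, A₂] i) :
    S ω = ![0, 2, 2, 4] i ∧ X₁ ω = ![0, 1, 2, 4] i ∧ X₂ ω = ![0, 1, 0, 0] i := by
  have hmem := hdisj.mem_iff_eq_of_mem hω
  have hₐ := hmem 1; have hᵦ := hmem 2; have h₂ := hmem 3
  fin_cases i <;> simp_all

/-- The Value-at-Risk-ceiling counterexample: a feasible non-comonotonic allocation
achieves total risk `25/12`, while every comonotonic allocation satisfying the same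
nonnegativity and `VaR_{0.995} ≤ 1` constraints has total risk at least `9/4 > 25/12`. -/
theorem stmt13 {Ω : Type*} [MeasurableSpace Ω] (μ : Measure Ω) [IsProbabilityMeasure μ]
    (A₀ A₁ₐ A₁ᵦ A₂ : Set Ω)
    (hm₀ : MeasurableSet A₀) (hmₐ : MeasurableSet A₁ₐ)
    (hmᵦ : MeasurableSet A₁ᵦ) (hm₂ : MeasurableSet A₂)
    (hdisj : Pairwise (Function.onFun Disjoint ![A₀, A₁ₐ, A₁ᵦ, A₂]))
    (hp₀ : μ A₀ = ENNReal.ofReal 0.9925) (hpₐ : μ A₁ₐ = ENNReal.ofReal 0.0025)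
    (hpᵦ : μ A₁ᵦ = ENNReal.ofReal 0.0025) (hp₂ : μ A₂ = ENNReal.ofReal 0.0025)
    (S X₁ X₂ : Ω → ℝ)
    (hS : S = fun ω => 2 * Set.indicator (A₁ₐ ∪ A₁ᵦ) 1 ω + 4 * Set.indicator A₂ 1 ω)
    (hX₁ : X₁ = fun ω => Set.indicator A₁ₐ 1 ω + 2 * Set.indicator A₁ᵦ 1 ω
      + 4 * Set.indicator A₂ 1 ω)
    (hX₂ : X₂ = fun ω => Set.indicator A₁ₐ 1 ω) :
    (∀ ω, X₁ ω + X₂ ω = S ω) ∧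
    (∀ ω, 0 ≤ X₁ ω) ∧ (∀ ω, 0 ≤ X₂ ω) ∧
    VaR μ X₁ 0.995 ≤ 1 ∧ VaR μ X₂ 0.995 ≤ 1 ∧
    ES μ X₁ 0.01 + ES μ X₂ 0.0075 = 25/12 ∧
    (∀ f₁ f₂ : ℝ → ℝ, Monotone f₁ → Monotone f₂ →
      (∀ ω, f₁ (S ω) + f₂ (S ω) = S ω) →
      (∀ ω, 0 ≤ f₁ (S ω)) → (∀ ω, 0 ≤ f₂ (S ω)) →
      VaR μ (fun ω => f₁ (S ω)) 0.995 ≤ 1 →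
      VaR μ (fun ω => f₂ (S ω)) 0.995 ≤ 1 →
      9/4 ≤ ES μ (fun ω => f₁ (S ω)) 0.01 + ES μ (fun ω => f₂ (S ω)) 0.0075) ∧
    (25 : ℝ)/12 < 9/4 := by
  have hB : ∀ i, MeasurableSet (![A₀, A₁ₐ, A₁ᵦ, A₂] i) := by
    intro i; fin_cases i <;> assumption
  have hmass : ∀ i, μ (![A₀, A₁ₐ, A₁ᵦ, A₂] i) =
      ENNReal.ofReal (![0.9925, 0.0025, 0.0025, 0.0025] i) := by
    intro i; fin_cases i <;> assumption
  have hval := values_on_blocks hdisj hS hX₁ hX₂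
  have hF₁ := toReal_measure_le_eq_atomsCDF hB hdisj hmass fun i ω hω => (hval i ω hω).2.1
  have hF₂ (x : ℝ) : (μ {ω | X₂ ω ≤ x}).toReal = atomsCDF 0.0025 0 0 1 x := by
    rw [toReal_measure_le_eq_atomsCDF hB hdisj hmass (fun i ω hω => (hval i ω hω).2.2) x,
      atomsCDF, atomsCDF]
    ring
  refine ⟨fun ω => ?_, fun ω => ?_, fun ω => ?_, ?_, ?_, ?_,
    fun f₁ f₂ hf₁ hf₂ hsum hnn₁ hnn₂ hVaR₁ _ => nine_div_four_le_ES_add_ES_of_comonotone hB hdisj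
      hmass (fun i ω hω => (hval i ω hω).1) hf₁ hf₂ hsum hnn₁ hnn₂ hVaR₁, by norm_num⟩
  · have hₐᵦ : Disjoint A₁ₐ A₁ᵦ := hdisj (by decide : (1 : Fin 4) ≠ 2)
    simp only [hS, hX₁, hX₂, indicator_union_of_disjoint hₐᵦ]
    ring
  · simp only [hX₁, indicator, Pi.one_apply]; positivity
  · simp only [hX₂, indicator, Pi.one_apply]; positivity
  · rw [VaR_eq_of_atomsCDF hF₁ (by norm_num) zero_le_one one_le_two (by norm_num) (by norm_num)
      (by norm_num)]
    norm_num
  · rw [VaR_eq_of_atomsCDF hF₂ (by norm_num) le_rfl le_rfl zero_le_one (by norm_num) (by norm_num)]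
    norm_num
  · rw [ES_eq_of_atomsCDF hF₁ (by norm_num) zero_le_one one_le_two (by norm_num) (by norm_num)
      (by norm_num),
      ES_eq_of_atomsCDF hF₂ (by norm_num) le_rfl le_rfl zero_le_one (by norm_num) (by norm_num)]
    norm_num
end

section
/- Fix s ∈ ℝ, constants cᵢ ∈ ℝ, δᵢ > 0, and bounds Lᵢ ∈ [−∞, ∞), Uᵢ ∈ (−∞, ∞] with Lᵢ ≤ Uᵢ and ∑Lᵢ ≤ s ≤ ∑Uᵢ. The program min ∑ᵢ δᵢ(xᵢ − cᵢ)² subject to ∑xᵢ = s and Lᵢ ≤ xᵢ ≤ Uᵢ has a unique minimizer, and x is the minimizer if and only if there exists η ∈ ℝ with xᵢ = Πᵢ(cᵢ + δᵢ⁻¹η) for every i and ∑ᵢ Πᵢ(cᵢ + δᵢ⁻¹η) = s, where Πᵢ(y) = min{Uᵢ, max{Lᵢ, y}}. -/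
/-! The clip `Πᵢ` is the projection onto `[Lᵢ, Uᵢ]`, so `(y - Πᵢ y)(z - Πᵢ y) ≤ 0` for every
`z` in the box. If `η` clears, i.e. `∑ Πᵢ(cᵢ + η/δᵢ) = s`, put `x = Π(c + η/δ)`; weighting
these inequalities by `δᵢ` and summing, the multiplier terms `η (yᵢ - xᵢ)` cancel because
`∑ yᵢ = ∑ xᵢ`, leaving `f x + ∑ δᵢ (yᵢ - xᵢ)² ≤ f y` for every feasible `y`. So `x` is a
minimizer, every minimizer equals it, and every clearing multiplier produces it. A clearing
`η` exists by the intermediate value theorem: `η ↦ ∑ Πᵢ(cᵢ + η/δᵢ)` is continuous, and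
`∑ Lᵢ ≤ s ≤ ∑ Uᵢ` makes it eventually `≤ s` at `-∞` and `≥ s` at `+∞`. -/

/-- Clip a real number to the (possibly infinite) interval `[l, u]`. -/
noncomputable def clipEReal (l u : EReal) (y : ℝ) : ℝ :=
  (max l (min u (y : EReal))).toReal

/-- Feasibility for the statewise quadratic program: clearing plus box bounds. -/
def QPFeasible {n : ℕ} (L U : Fin n → EReal) (s : ℝ) (x : Fin n → ℝ) : Prop :=
  (∑ i, x i = s) ∧ ∀ i, L i ≤ (x i : EReal) ∧ (x i : EReal) ≤ U i

open Filter Finset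

namespace EReal

theorem coe_sum {ι : Type*} (s : Finset ι) (t : ι → ℝ) :
    ((∑ i ∈ s, t i : ℝ) : EReal) = ∑ i ∈ s, (t i : EReal) :=
  map_sum (⟨⟨Real.toEReal, coe_zero⟩, coe_add⟩ : ℝ →+ EReal) t s

variable {ι : Type*} [Fintype ι]

theorem exists_le_coe_of_sum_le {L : ι → EReal} (hL : ∀ i, L i ≠ ⊤) {s : ℝ}
    (h : ∑ i, L i ≤ s) : ∃ t : ι → ℝ, (∀ i, L i ≤ t i) ∧ ∑ i, t i ≤ s := by
  classical
  by_cases hfin : ∀ i, L i ≠ ⊥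
  · refine ⟨fun i => (L i).toReal, fun i => le_coe_toReal (hL i), ?_⟩
    rwa [← EReal.coe_le_coe_iff, coe_sum, sum_congr rfl fun i _ => coe_toReal (hL i) (hfin i)]
  · push Not at hfin
    obtain ⟨i₀, hi₀⟩ := hfin
    refine ⟨fun i => (L i).toReal + if i = i₀ then s - ∑ j, (L j).toReal else 0, fun i => ?_, ?_⟩
    · rcases eq_or_ne i i₀ with rfl | hi
      · simp [hi₀]
      · simpa [hi] using le_coe_toReal (hL i)
    · simp [sum_add_distrib]

theorem exists_coe_le_of_le_sum {U : ι → EReal} (hU : ∀ i, U i ≠ ⊥) {s : ℝ}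
    (h : s ≤ ∑ i, U i) : ∃ t : ι → ℝ, (∀ i, t i ≤ U i) ∧ s ≤ ∑ i, t i := by
  classical
  by_cases hfin : ∀ i, U i ≠ ⊤
  · refine ⟨fun i => (U i).toReal, fun i => coe_toReal_le (hU i), ?_⟩
    rwa [← EReal.coe_le_coe_iff, coe_sum, sum_congr rfl fun i _ => coe_toReal (hfin i) (hU i)]
  · push Not at hfin
    obtain ⟨i₀, hi₀⟩ := hfin
    refine ⟨fun i => (U i).toReal + if i = i₀ then s - ∑ j, (U j).toReal else 0, fun i => ?_, ?_⟩
    · rcases eq_or_ne i i₀ with rfl | hi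
      · simp [hi₀]
      · simpa [hi] using coe_toReal_le (hU i)
    · simp [sum_add_distrib]

end EReal

section Clip

variable {l u : EReal}

theorem coe_clipEReal (hl : l ≠ ⊤) (hu : u ≠ ⊥) (y : ℝ) :
    (clipEReal l u y : EReal) = max l (min u y) :=
  EReal.coe_toReal
    (max_lt hl.lt_top ((min_le_right _ _).trans_lt (EReal.coe_lt_top y))).ne
    ((lt_min hu.bot_lt (EReal.bot_lt_coe y)).trans_le (le_max_right _ _)).ne'

theorem clipEReal_mem (hl : l ≠ ⊤) (hu : u ≠ ⊥) (hlu : l ≤ u) (y : ℝ) :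
    l ≤ clipEReal l u y ∧ (clipEReal l u y : EReal) ≤ u := by
  rw [coe_clipEReal hl hu]
  exact ⟨le_max_left _ _, max_le hlu (min_le_left _ _)⟩

theorem continuous_clipEReal (hl : l ≠ ⊤) (hu : u ≠ ⊥) : Continuous (clipEReal l u) :=
  EReal.continuousOn_toReal.comp_continuous
    (continuous_const.max (continuous_const.min continuous_coe_real_ereal)) fun y => by
    rw [← coe_clipEReal hl hu y]
    simp

theorem clipEReal_le_max (hu : u ≠ ⊥) {z : ℝ} (hlz : l ≤ z) (y : ℝ) :
    clipEReal l u y ≤ max z y := by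
  rw [← EReal.coe_le_coe_iff, coe_clipEReal (hlz.trans_lt (EReal.coe_lt_top z)).ne hu,
    EReal.coe_strictMono.monotone.map_max]
  exact max_le_max hlz (min_le_right _ _)

theorem min_le_clipEReal (hl : l ≠ ⊤) {z : ℝ} (hzu : z ≤ u) (y : ℝ) :
    min z y ≤ clipEReal l u y := by
  rw [← EReal.coe_le_coe_iff, coe_clipEReal hl ((EReal.bot_lt_coe z).trans_le hzu).ne',
    EReal.coe_strictMono.monotone.map_min]
  exact (min_le_min hzu le_rfl).trans (le_max_right _ _)

theorem sub_mul_sub_clipEReal_nonpos (hl : l ≠ ⊤) (hu : u ≠ ⊥) {z : ℝ} (hlz : l ≤ z)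
    (hzu : z ≤ u) (y : ℝ) : (y - clipEReal l u y) * (z - clipEReal l u y) ≤ 0 := by
  rcases lt_trichotomy y (clipEReal l u y) with h | h | h
  · have := clipEReal_le_max hu hlz y
    exact mul_nonpos_of_nonpos_of_nonneg (by linarith)
      (sub_nonneg.2 ((le_max_iff.1 this).resolve_right h.not_ge))
  · simp [← h]
  · have := min_le_clipEReal hl hzu y
    exact mul_nonpos_of_nonneg_of_nonpos (by linarith)
      (sub_nonpos.2 ((min_le_iff.1 this).resolve_right h.not_ge))

theorem eventually_clipEReal_le (hu : u ≠ ⊥) {t : ℝ} (hlt : l ≤ t) :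
    ∀ᶠ y in atBot, clipEReal l u y ≤ t :=
  eventually_le_atBot t |>.mono fun y hy =>
    (clipEReal_le_max hu hlt y).trans (max_le le_rfl hy)

theorem eventually_le_clipEReal (hl : l ≠ ⊤) {t : ℝ} (htu : t ≤ u) :
    ∀ᶠ y in atTop, t ≤ clipEReal l u y :=
  eventually_ge_atTop t |>.mono fun y hy =>
    (le_min le_rfl hy).trans (min_le_clipEReal hl htu y)

end Clip

theorem exists_sum_clipEReal_eq {ι : Type*} [Fintype ι] (c δ : ι → ℝ) (hδ : ∀ i, 0 < δ i)
    {L U : ι → EReal} (hL : ∀ i, L i ≠ ⊤) (hU : ∀ i, U i ≠ ⊥) {s : ℝ}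
    (hsL : ∑ i, L i ≤ s) (hsU : s ≤ ∑ i, U i) :
    ∃ η : ℝ, ∑ i, clipEReal (L i) (U i) (c i + η / δ i) = s := by
  set f : ℝ → ℝ := fun η => ∑ i, clipEReal (L i) (U i) (c i + η / δ i)
  obtain ⟨a, haL, has⟩ := EReal.exists_le_coe_of_sum_le hL hsL
  obtain ⟨b, hbU, hbs⟩ := EReal.exists_coe_le_of_le_sum hU hsU
  have hlo : ∀ᶠ η in atBot, f η ≤ s := by
    refine (eventually_all.2 fun i => ?_).mono fun η h => (sum_le_sum fun i _ => h i).trans has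
    exact (tendsto_atBot_add_const_left _ (c i) (tendsto_id.atBot_div_const (hδ i))).eventually
      (eventually_clipEReal_le (hU i) (haL i))
  have hhi : ∀ᶠ η in atTop, s ≤ f η := by
    refine (eventually_all.2 fun i => ?_).mono fun η h => hbs.trans (sum_le_sum fun i _ => h i)
    exact (tendsto_atTop_add_const_left _ (c i) (tendsto_id.atTop_div_const (hδ i))).eventually
      (eventually_le_clipEReal (hL i) (hbU i))
  obtain ⟨η₀, hη₀⟩ := hlo.exists
  obtain ⟨η₁, hη₁⟩ := hhi.exists
  have hf : Continuous f := continuous_finsetSum _ fun i _ =>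
    (continuous_clipEReal (hL i) (hU i)).comp (by fun_prop)
  obtain ⟨η, -, hη⟩ := intermediate_value_uIcc hf.continuousOn (Set.mem_uIcc.2 (.inl ⟨hη₀, hη₁⟩))
  exact ⟨η, hη⟩

theorem clipEReal_sq_add_le {l u : EReal} (hl : l ≠ ⊤) (hu : u ≠ ⊥) {δ : ℝ} (hδ : 0 < δ)
    (c η : ℝ) {z : ℝ} (hlz : l ≤ z) (hzu : z ≤ u) :
    δ * (clipEReal l u (c + η / δ) - c) ^ 2 + 2 * η * (z - clipEReal l u (c + η / δ))
      + δ * (z - clipEReal l u (c + η / δ)) ^ 2 ≤ δ * (z - c) ^ 2 := by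
  set y := c + η / δ
  have hη : η = δ * (y - c) := by simp only [y]; field_simp; ring
  have h := mul_nonpos_of_nonneg_of_nonpos hδ.le (sub_mul_sub_clipEReal_nonpos hl hu hlz hzu y)
  rw [hη]
  linear_combination 2 * h

section WeightedSq

variable {ι : Type*} [Fintype ι] {c δ : ι → ℝ}

theorem sum_clipEReal_sq_add_le (hδ : ∀ i, 0 < δ i) {L U : ι → EReal} (hL : ∀ i, L i ≠ ⊤)
    (hU : ∀ i, U i ≠ ⊥) (η : ℝ) {y : ι → ℝ} (hy : ∀ i, L i ≤ y i ∧ (y i : EReal) ≤ U i)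
    (hsum : ∑ i, y i = ∑ i, clipEReal (L i) (U i) (c i + η / δ i)) :
    ∑ i, δ i * (clipEReal (L i) (U i) (c i + η / δ i) - c i) ^ 2
      + ∑ i, δ i * (y i - clipEReal (L i) (U i) (c i + η / δ i)) ^ 2
      ≤ ∑ i, δ i * (y i - c i) ^ 2 := by
  have hlin : ∑ i, 2 * η * (y i - clipEReal (L i) (U i) (c i + η / δ i)) = 0 := by
    rw [← mul_sum, sum_sub_distrib, hsum, sub_self, mul_zero]
  calc _ = ∑ i, (δ i * (clipEReal (L i) (U i) (c i + η / δ i) - c i) ^ 2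
          + 2 * η * (y i - clipEReal (L i) (U i) (c i + η / δ i))
          + δ i * (y i - clipEReal (L i) (U i) (c i + η / δ i)) ^ 2) := by
        rw [sum_add_distrib, sum_add_distrib, hlin, add_zero]
    _ ≤ _ := sum_le_sum fun i _ =>
        clipEReal_sq_add_le (hL i) (hU i) (hδ i) (c i) η (hy i).1 (hy i).2

theorem eq_of_sum_mul_sq_sub_nonpos (hδ : ∀ i, 0 < δ i) {x y : ι → ℝ}
    (h : ∑ i, δ i * (x i - y i) ^ 2 ≤ 0) : x = y := by
  have hnn : ∀ i ∈ univ, 0 ≤ δ i * (x i - y i) ^ 2 := fun i _ => by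
    have := hδ i; positivity
  funext i
  have := (sum_eq_zero_iff_of_nonneg hnn).1 (h.antisymm (sum_nonneg hnn)) i (mem_univ i)
  simpa [(hδ i).ne', sub_eq_zero] using this

end WeightedSq

def IsQPMinimizer {n : ℕ} (c δ : Fin n → ℝ) (L U : Fin n → EReal) (s : ℝ) (x : Fin n → ℝ) :
    Prop :=
  QPFeasible L U s x ∧ ∀ y, QPFeasible L U s y →
    ∑ i, δ i * (x i - c i) ^ 2 ≤ ∑ i, δ i * (y i - c i) ^ 2

section Minimizer

variable {n : ℕ} {c δ : Fin n → ℝ} {L U : Fin n → EReal} {s η : ℝ}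

theorem isQPMinimizer_clipEReal (hδ : ∀ i, 0 < δ i) (hL : ∀ i, L i ≠ ⊤) (hU : ∀ i, U i ≠ ⊥)
    (hLU : ∀ i, L i ≤ U i) (hη : ∑ i, clipEReal (L i) (U i) (c i + η / δ i) = s) :
    IsQPMinimizer c δ L U s fun i => clipEReal (L i) (U i) (c i + η / δ i) := by
  refine ⟨⟨hη, fun i => clipEReal_mem (hL i) (hU i) (hLU i) _⟩, fun y hy => ?_⟩
  have := sum_clipEReal_sq_add_le hδ hL hU η hy.2 (hy.1.trans hη.symm)
  have : 0 ≤ ∑ i, δ i * (y i - clipEReal (L i) (U i) (c i + η / δ i)) ^ 2 :=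
    sum_nonneg fun i _ => by have := hδ i; positivity
  linarith

theorem IsQPMinimizer.eq_clipEReal (hδ : ∀ i, 0 < δ i) (hL : ∀ i, L i ≠ ⊤)
    (hU : ∀ i, U i ≠ ⊥) (hLU : ∀ i, L i ≤ U i)
    (hη : ∑ i, clipEReal (L i) (U i) (c i + η / δ i) = s) {x : Fin n → ℝ}
    (hx : IsQPMinimizer c δ L U s x) : x = fun i => clipEReal (L i) (U i) (c i + η / δ i) := by
  have := sum_clipEReal_sq_add_le hδ hL hU η hx.1.2 (hx.1.1.trans hη.symm)
  have := hx.2 _ (isQPMinimizer_clipEReal hδ hL hU hLU hη).1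
  exact eq_of_sum_mul_sq_sub_nonpos hδ (by linarith)

end Minimizer

/-- The statewise quadratic program `min ∑ δᵢ(xᵢ-cᵢ)²` subject to `∑xᵢ = s`,
`Lᵢ ≤ xᵢ ≤ Uᵢ` has a unique minimizer, characterized by the existence of a
multiplier `η` with `xᵢ = Πᵢ(cᵢ + δᵢ⁻¹η)` and clearing of the clipped vector. -/
theorem stmt15 {n : ℕ} (c δ : Fin n → ℝ) (hδ : ∀ i, 0 < δ i)
    (L U : Fin n → EReal) (hL : ∀ i, L i ≠ ⊤) (hU : ∀ i, U i ≠ ⊥)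
    (hLU : ∀ i, L i ≤ U i) (s : ℝ)
    (hsL : (∑ i, L i) ≤ (s : EReal)) (hsU : (s : EReal) ≤ ∑ i, U i) :
    (∃! x : Fin n → ℝ, QPFeasible L U s x ∧
      ∀ y : Fin n → ℝ, QPFeasible L U s y →
        (∑ i, δ i * (x i - c i) ^ 2) ≤ ∑ i, δ i * (y i - c i) ^ 2) ∧
    ∀ x : Fin n → ℝ,
      (QPFeasible L U s x ∧
        ∀ y : Fin n → ℝ, QPFeasible L U s y →
          (∑ i, δ i * (x i - c i) ^ 2) ≤ ∑ i, δ i * (y i - c i) ^ 2) ↔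
      (∃ η : ℝ, (∀ i, x i = clipEReal (L i) (U i) (c i + η / δ i)) ∧
        (∑ i, clipEReal (L i) (U i) (c i + η / δ i)) = s) := by
  obtain ⟨η, hη⟩ := exists_sum_clipEReal_eq c δ hδ hL hU hsL hsU
  have hmin := isQPMinimizer_clipEReal hδ hL hU hLU hη
  have huniq (x) (hx : IsQPMinimizer c δ L U s x) := hx.eq_clipEReal hδ hL hU hLU hη
  refine ⟨⟨_, hmin, huniq⟩, fun x => ⟨fun hx => ⟨η, fun i => by rw [huniq x hx], hη⟩, ?_⟩⟩
  rintro ⟨η', hx, hη'⟩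
  rw [funext hx]
  exact isQPMinimizer_clipEReal hδ hL hU hLU hη'
end

section
/- Let w₁,…,wₙ > 0 and let Y₁,…,Yₙ be square-integrable random variables with ∑ᵢ Yᵢ = S. Then ∑ᵢ wᵢ·Var(Yᵢ) ≥ (∑ᵢ wᵢ⁻¹)⁻¹·Var(S), with equality when Yᵢ = (wᵢ⁻¹/∑ⱼwⱼ⁻¹)·S + constants. -/
open MeasureTheory ProbabilityTheory

/-! Centre the `Yᵢ`; pointwise, Cauchy–Schwarz in the form `(∑ zᵢ)² / ∑ wᵢ⁻¹ ≤ ∑ wᵢ zᵢ²` bounds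
the squared centred sum, and integrating gives the inequality. For the proportional rule,
`Var(Yᵢ) = (wᵢ⁻¹ / ∑ⱼ wⱼ⁻¹)² Var(S)` and `∑ᵢ wᵢ (wᵢ⁻¹ / ∑ⱼ wⱼ⁻¹)² = (∑ⱼ wⱼ⁻¹)⁻¹`. -/

namespace Finset

variable {ι : Type*}

theorem inv_sum_inv_mul_sq_sum_le (s : Finset ι) {w : ι → ℝ} (hw : ∀ i ∈ s, 0 < w i)
    (z : ι → ℝ) : (∑ i ∈ s, (w i)⁻¹)⁻¹ * (∑ i ∈ s, z i) ^ 2 ≤ ∑ i ∈ s, w i * z i ^ 2 := by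
  calc (∑ i ∈ s, (w i)⁻¹)⁻¹ * (∑ i ∈ s, z i) ^ 2
      = (∑ i ∈ s, z i) ^ 2 / ∑ i ∈ s, (w i)⁻¹ := inv_mul_eq_div _ _
    _ ≤ ∑ i ∈ s, z i ^ 2 / (w i)⁻¹ := sq_sum_div_le_sum_sq_div s z fun i hi => inv_pos.2 (hw i hi)
    _ = ∑ i ∈ s, w i * z i ^ 2 := sum_congr rfl fun i _ => by rw [div_inv_eq_mul, mul_comm]

theorem sum_mul_sq_inv_div_sum_inv (s : Finset ι) {w : ι → ℝ} (hw : ∀ i ∈ s, w i ≠ 0) :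
    ∑ i ∈ s, w i * ((w i)⁻¹ / ∑ j ∈ s, (w j)⁻¹) ^ 2 = (∑ i ∈ s, (w i)⁻¹)⁻¹ := by
  set T := ∑ j ∈ s, (w j)⁻¹
  calc ∑ i ∈ s, w i * ((w i)⁻¹ / T) ^ 2 = ∑ i ∈ s, (w i)⁻¹ * (T⁻¹) ^ 2 :=
        sum_congr rfl fun i hi => by field_simp [hw i hi]
    _ = T⁻¹ := by
        rw [← sum_mul]
        rcases eq_or_ne T 0 with hT | hT
        · simp [hT]
        · rw [sq, ← mul_assoc, mul_inv_cancel₀ hT, one_mul]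

end Finset

namespace ProbabilityTheory

variable {Ω ι : Type*} [MeasurableSpace Ω] {μ : Measure Ω} [IsFiniteMeasure μ]

theorem inv_sum_inv_mul_variance_sum_le (s : Finset ι) {w : ι → ℝ} (hw : ∀ i ∈ s, 0 < w i)
    {Y : ι → Ω → ℝ} (hY : ∀ i ∈ s, MemLp (Y i) 2 μ) :
    (∑ i ∈ s, (w i)⁻¹)⁻¹ * Var[fun ω => ∑ i ∈ s, Y i ω; μ] ≤ ∑ i ∈ s, w i * Var[Y i; μ] := by
  set Z : ι → Ω → ℝ := fun i ω => Y i ω - μ[Y i]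
  have hZ_sq : ∀ i ∈ s, Integrable (fun ω => Z i ω ^ 2) μ :=
    fun i hi => ((hY i hi).sub (memLp_const _)).integrable_sq
  have hsum_Lp : MemLp (fun ω => ∑ i ∈ s, Y i ω) 2 μ := memLp_finsetSum s hY
  have hcentre : ∀ ω, (∑ i ∈ s, Y i ω) - μ[fun ω => ∑ i ∈ s, Y i ω] = ∑ i ∈ s, Z i ω := by
    intro ω
    rw [integral_finsetSum s fun i hi => (hY i hi).integrable one_le_two, ← Finset.sum_sub_distrib]
  calc (∑ i ∈ s, (w i)⁻¹)⁻¹ * Var[fun ω => ∑ i ∈ s, Y i ω; μ]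
      = ∫ ω, (∑ i ∈ s, (w i)⁻¹)⁻¹ * (∑ i ∈ s, Z i ω) ^ 2 ∂μ := by
        simp only [variance_eq_integral hsum_Lp.aemeasurable, hcentre, integral_const_mul]
    _ ≤ ∫ ω, ∑ i ∈ s, w i * Z i ω ^ 2 ∂μ :=
        integral_mono_of_nonneg (.of_forall fun ω => mul_nonneg
          (inv_nonneg.2 (Finset.sum_nonneg fun i hi => (inv_pos.2 (hw i hi)).le)) (sq_nonneg _))
          (integrable_finsetSum s fun i hi => (hZ_sq i hi).const_mul (w i))
          (.of_forall fun ω => Finset.inv_sum_inv_mul_sq_sum_le s hw _)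
    _ = ∑ i ∈ s, w i * Var[Y i; μ] := by
        rw [integral_finsetSum s fun i hi => (hZ_sq i hi).const_mul (w i)]
        refine Finset.sum_congr rfl fun i hi => ?_
        rw [integral_const_mul, variance_eq_integral (hY i hi).aemeasurable]

end ProbabilityTheory

/-- Weighted variance lower bound: if `∑ᵢ Yᵢ = S` then
`∑ᵢ wᵢ·Var(Yᵢ) ≥ (∑ᵢ wᵢ⁻¹)⁻¹·Var(S)`, with equality for the proportional rule
`Yᵢ = (wᵢ⁻¹/∑ⱼwⱼ⁻¹)·S + constants`. -/
theorem stmt19 {Ω : Type*} [MeasurableSpace Ω] (μ : Measure Ω) [IsProbabilityMeasure μ]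
    (n : ℕ) (w : Fin n → ℝ) (hw : ∀ i, 0 < w i)
    (S : Ω → ℝ) (hS : MemLp S 2 μ) :
    (∀ Y : Fin n → Ω → ℝ, (∀ i, MemLp (Y i) 2 μ) →
      (∀ ω, (∑ i, Y i ω) = S ω) →
      (∑ i, (w i)⁻¹)⁻¹ * variance S μ ≤ ∑ i, w i * variance (Y i) μ) ∧
    ∀ Y : Fin n → Ω → ℝ, ∀ b : Fin n → ℝ,
      (Y = fun i ω => ((w i)⁻¹ / ∑ j, (w j)⁻¹) * S ω + b i) →
      (∀ ω, (∑ i, Y i ω) = S ω) →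
      (∑ i, (w i)⁻¹)⁻¹ * variance S μ = ∑ i, w i * variance (Y i) μ := by
  constructor
  · intro Y hY hsum
    rw [← funext hsum]
    exact inv_sum_inv_mul_variance_sum_le _ (fun i _ => hw i) fun i _ => hY i
  · rintro Y b rfl -
    simp only [variance_add_const (hS.const_mul _).aestronglyMeasurable, variance_const_mul,
      ← mul_assoc, ← Finset.sum_mul]
    rw [Finset.sum_mul_sq_inv_div_sum_inv _ fun i _ => (hw i).ne']
end
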